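/- arXiv:2505.16655 — 2 statements merged into one kernel-verified Lean document; each statement's English description precedes it below -/
import Mathlib

section
/- Existence of a chain connection. Let 0 < a < b < ∞, let y, z ∈ Λ₁ := (−1/2, 1/2)^d, and set m := 2·⌊√d/(b−a)⌋ + 2. Then there is a finite sequence (z^i)_{i=0}^m of points of Λ_{1+2a} := (−(1+2a)/2, (1+2a)/2)^d with z^0 = z, z^m = y, and |z^i − z^{i−1}| ∈ [a, b] for every i ∈ {1, …, m}. -/
open MeasureTheory Real Set
open scoped ENNReal

noncomputable section

abbrev EucSp (d : ℕ) := EuclideanSpace ℝ (Fin d)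

/-- Row-sum norm of a real matrix. -/
def rowSumNorm {d : ℕ} (M : Matrix (Fin d) (Fin d) ℝ) : ℝ := ⨆ i, ∑ j, |M i j|

/-- `i`-th partial derivative of a function `f : ℝ^d → ℂ`. -/
def pd {d : ℕ} (i : Fin d) (f : EucSp d → ℂ) (x : EucSp d) : ℂ :=
  fderiv ℝ f x (EuclideanSpace.single i 1)

/-- The divergence form second order operator `Hψ = -div(A∇ψ) + bᵀ∇ψ + cψ`. -/
def Hop {d : ℕ} (A : EucSp d → Matrix (Fin d) (Fin d) ℝ)
    (b : EucSp d → Fin d → ℂ) (c : EucSp d → ℂ) (ψ : EucSp d → ℂ) (x : EucSp d) : ℂ :=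
  - ∑ i, pd i (fun y => ∑ j, (A y i j : ℂ) * pd j ψ y) x
    + ∑ i, b x i * pd i ψ x + c x * ψ x

/-- Euclidean norm of a vector in ℂ^d. -/
def eucNormC {d : ℕ} (v : Fin d → ℂ) : ℝ := Real.sqrt (∑ i, ‖v i‖ ^ 2)

/-- Open centered cube `Λ_G(x₀)` of side length `G`. -/
def cube {d : ℕ} (G : ℝ) (x₀ : EucSp d) : Set (EucSp d) := {x | ∀ i, |x i - x₀ i| < G / 2}

/-- The lattice point `G·k ∈ ℝ^d` for `k ∈ ℤ^d`. -/
def gridPt {d : ℕ} (G : ℝ) (k : Fin d → ℤ) : EucSp d :=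
  (WithLp.equiv 2 (Fin d → ℝ)).symm fun i => G * (k i : ℝ)

/-- `(G,δ)`-equidistributed sequence. -/
def Equidistributed {d : ℕ} (G δ : ℝ) (z : (Fin d → ℤ) → EucSp d) : Prop :=
  ∀ k, Metric.ball (z k) δ ⊆ cube G (gridPt G k)

/-- `S_{δ,Z}`, the union of the `δ`-balls around the points of the sequence. -/
def sdz {d : ℕ} (δ : ℝ) (z : (Fin d → ℤ) → EucSp d) : Set (EucSp d) :=
  ⋃ k, Metric.ball (z k) δ

/-- Squared `L²` norm over a set. -/
def l2sq {d : ℕ} (f : EucSp d → ℂ) (Γ : Set (EucSp d)) : ℝ :=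
  ∫ x in Γ, ‖f x‖ ^ 2

/-- Essential supremum norm over a set. -/
def supNormOn {d : ℕ} {F : Type*} [NormedAddCommGroup F] (f : EucSp d → F)
    (Γ : Set (EucSp d)) : ℝ :=
  (eLpNorm f ⊤ ((volume : Measure (EucSp d)).restrict Γ)).toReal

/-- Pointwise symmetry of the coefficient matrix on a set. -/
def IsSymmA {d : ℕ} (A : EucSp d → Matrix (Fin d) (Fin d) ℝ) (Ω : Set (EucSp d)) : Prop :=
  ∀ x ∈ Ω, ∀ i j, A x i j = A x j i

/-- Uniform ellipticity `θ_E⁻¹|ξ|² ≤ ξᵀA(x)ξ ≤ θ_E|ξ|²` on a set. -/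
def IsElliptic {d : ℕ} (θE : ℝ) (A : EucSp d → Matrix (Fin d) (Fin d) ℝ)
    (Ω : Set (EucSp d)) : Prop :=
  ∀ x ∈ Ω, ∀ ξ : Fin d → ℝ,
    θE⁻¹ * (∑ i, ξ i ^ 2) ≤ (∑ i, ∑ j, ξ i * A x i j * ξ j) ∧
      (∑ i, ∑ j, ξ i * A x i j * ξ j) ≤ θE * (∑ i, ξ i ^ 2)

/-- Lipschitz condition in the row-sum norm on a set. -/
def IsLipA {d : ℕ} (θL : ℝ) (A : EucSp d → Matrix (Fin d) (Fin d) ℝ)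
    (Ω : Set (EucSp d)) : Prop :=
  ∀ x ∈ Ω, ∀ y ∈ Ω, rowSumNorm (A x - A y) ≤ θL * ‖x - y‖

/-- The annulus `B(x,R) \ closure(B(x,r))`. -/
def annulus {d : ℕ} (x : EucSp d) (r R : ℝ) : Set (EucSp d) :=
  Metric.ball x R \ Metric.closedBall x r

/-- `μ = 33·d·R₃·θ_E^{11/2}·θ_L + ε`. -/
def muOf (d : ℕ) (θE θL R₃ ε : ℝ) : ℝ := 33 * d * R₃ * θE ^ ((11:ℝ)/2) * θL + ε

/-- `μ₁`, defined from `μ` and `θ_E`. -/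
def mu1Of (θE μ : ℝ) : ℝ :=
  if μ * Real.sqrt θE ≤ 1 then Real.exp (μ * Real.sqrt θE) else Real.exp 1 * (μ * Real.sqrt θE)

/-- The quadratic gradient form `∇uᵀA∇ū = ∑_{ij} a^{ij} ∂_i u ∂_j ū` (a real number). -/
def gradForm {d : ℕ} (A : EucSp d → Matrix (Fin d) (Fin d) ℝ) (u : EucSp d → ℂ)
    (x : EucSp d) : ℝ :=
  (∑ i, ∑ j, (A x i j : ℂ) * pd i u x * (starRingEnd ℂ) (pd j u x)).re

/-- `σ(x) = (xᵀA(0)⁻¹x)^{1/2}`. -/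
def sigmaA {d : ℕ} (A : EucSp d → Matrix (Fin d) (Fin d) ℝ) (x : EucSp d) : ℝ :=
  Real.sqrt (∑ i, ∑ j, x i * (A 0)⁻¹ i j * x j)

/-- `φ(r) = r·exp(−∫₀^r (1−e^{−μt})/t dt)`. -/
def phiW (μ r : ℝ) : ℝ :=
  r * Real.exp (-(∫ t in (0:ℝ)..r, (1 - Real.exp (-(μ * t))) / t))

/-- The Carleman weight `w_{ρ,μ}(x) = φ(σ(x/ρ))`. -/
def wWeight {d : ℕ} (A : EucSp d → Matrix (Fin d) (Fin d) ℝ) (ρ μ : ℝ) (x : EucSp d) : ℝ :=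
  phiW μ (sigmaA A (ρ⁻¹ • x))


set_option maxHeartbeats 1000000 in
/-- **Existence of a chain connection** (Lemma 5.5): any two points `y, z` of the unit
cube `Λ₁` can be joined by a chain of `m = 2⌊√d/(b−a)⌋ + 2` steps of length in `[a,b]`
staying inside the cube `Λ_{1+2a}`. -/
theorem chain_connection (d : ℕ) (hd : 0 < d) (a b : ℝ) (ha : 0 < a) (hab : a < b)
    (y z : EucSp d) (hy : y ∈ cube 1 (0 : EucSp d)) (hz : z ∈ cube 1 (0 : EucSp d)) :
    ∃ τ : ℕ → EucSp d,
      τ 0 = z ∧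
      τ (2 * ⌊Real.sqrt d / (b - a)⌋₊ + 2) = y ∧
      (∀ i ≤ 2 * ⌊Real.sqrt d / (b - a)⌋₊ + 2, τ i ∈ cube (1 + 2 * a) (0 : EucSp d)) ∧
      (∀ i : ℕ, 1 ≤ i → i ≤ 2 * ⌊Real.sqrt d / (b - a)⌋₊ + 2 →
        a ≤ ‖τ i - τ (i - 1)‖ ∧ ‖τ i - τ (i - 1)‖ ≤ b) := by
  classical
  have hba : 0 < b - a := sub_pos.mpr hab
  haveI : Nonempty (Fin d) := ⟨⟨0, hd⟩⟩
  set N := ⌊Real.sqrt d / (b - a)⌋₊ with hNdef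
  have hN1 : (0:ℝ) < (N:ℝ) + 1 := by positivity
  simp only [cube, Set.mem_setOf_eq, PiLp.zero_apply, sub_zero] at hy hz
  have hy' : ∀ i, |y i| < 1/2 := by intro i; simpa using hy i
  have hz' : ∀ i, |z i| < 1/2 := by intro i; simpa using hz i
  have hDlt : ‖y - z‖ < Real.sqrt d := by
    rw [EuclideanSpace.norm_eq]
    apply Real.sqrt_lt_sqrt (by positivity)
    calc ∑ i, ‖(y - z) i‖^2 < ∑ _i : Fin d, 1 := by
          apply Finset.sum_lt_sum_of_nonempty Finset.univ_nonempty
          intro i _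
          have h1 : ‖(y - z) i‖ < 1 := by
            simp only [PiLp.sub_apply, Real.norm_eq_abs]
            calc |y i - z i| ≤ |y i| + |z i| := abs_sub _ _
              _ < 1 := by linarith [hy' i, hz' i]
          nlinarith [norm_nonneg ((y - z) i)]
      _ = d := by simp
  have hsd : Real.sqrt d < ((N:ℝ) + 1) * (b - a) := by
    have h := Nat.lt_floor_add_one (Real.sqrt d / (b - a))
    rw [div_lt_iff₀ hba] at h
    rw [hNdef]
    linarith [h]
  set δ := ‖y - z‖ / ((N:ℝ) + 1) with hδdef
  have hδ0 : 0 ≤ δ := div_nonneg (norm_nonneg _) hN1.le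
  have hδlt : δ < b - a := by
    rw [hδdef, div_lt_iff₀ hN1]
    calc ‖y - z‖ < Real.sqrt d := hDlt
      _ < ((N:ℝ)+1) * (b - a) := hsd
      _ = (b - a) * ((N:ℝ)+1) := mul_comm _ _
  set e : EucSp d := if y = z then EuclideanSpace.single ⟨0, hd⟩ (1:ℝ) else ‖y - z‖⁻¹ • (y - z)
    with hedef
  have hne : ‖e‖ = 1 := by
    rw [hedef]; split_ifs with h
    · simp [EuclideanSpace.norm_single]
    · have h0 : ‖y - z‖ ≠ 0 := by simpa [sub_eq_zero] using h
      rw [norm_smul, norm_inv, norm_norm, inv_mul_cancel₀ h0]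
  have hkey : (((N:ℝ) + 1))⁻¹ • (y - z) = δ • e := by
    rw [hedef]; split_ifs with h
    · simp [h, hδdef]
    · have h0 : ‖y - z‖ ≠ 0 := by simpa [sub_eq_zero] using h
      rw [smul_smul]
      congr 1
      rw [hδdef]
      field_simp
  have hmem : ∀ t s : ℝ, 0 ≤ t → t ≤ 1 → 0 ≤ s → s ≤ a →
      z + t • (y - z) + s • e ∈ cube (1 + 2*a) (0 : EucSp d) := by
    intro t s ht0 ht1 hs0 hsa
    simp only [cube, Set.mem_setOf_eq, PiLp.zero_apply, sub_zero]
    intro i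
    have hei : |e i| ≤ 1 := by
      have h1 : |e i| ≤ ‖e‖ := by
        rw [EuclideanSpace.norm_eq, ← Real.sqrt_sq (abs_nonneg (e i))]
        apply Real.sqrt_le_sqrt
        rw [sq_abs]
        calc e i ^ 2 = ‖e i‖ ^ 2 := by rw [Real.norm_eq_abs, sq_abs]
          _ ≤ ∑ j, ‖e j‖ ^ 2 :=
              Finset.single_le_sum (f := fun j => ‖e j‖ ^ 2) (fun j _ => by positivity)
                (Finset.mem_univ i)
      rwa [hne] at h1
    simp only [PiLp.add_apply, PiLp.smul_apply, PiLp.sub_apply, smul_eq_mul]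
    have hz1 := hz' i; have hy1 := hy' i
    have habs : |z i + t * (y i - z i)| < 1/2 := by
      have hrw : z i + t * (y i - z i) = (1 - t) * z i + t * y i := by ring
      rw [hrw]
      have h1 : |(1-t) * z i + t * y i| ≤ (1-t) * |z i| + t * |y i| := by
        calc |(1-t)*z i + t*y i| ≤ |(1-t)*z i| + |t*y i| := abs_add_le _ _
          _ = (1-t)*|z i| + t*|y i| := by
              rw [abs_mul, abs_mul, abs_of_nonneg (by linarith : (0:ℝ) ≤ 1 - t),
                abs_of_nonneg ht0]
      rcases le_total (|z i|) (|y i|) with h | h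
      · nlinarith
      · nlinarith
    calc |z i + t*(y i - z i) + s * e i| ≤ |z i + t*(y i - z i)| + |s * e i| := abs_add_le _ _
      _ < 1/2 + a := by
          have h2 : |s * e i| ≤ a := by
            rw [abs_mul, abs_of_nonneg hs0]
            nlinarith [abs_nonneg (e i)]
          linarith
      _ = (1 + 2*a)/2 := by ring
  clear_value δ e
  refine ⟨fun i => z + ((((i+1)/2 : ℕ) : ℝ) * (((N:ℝ)+1))⁻¹) • (y - z)
      + (if Odd i then a • e else 0), ?_, ?_, ?_, ?_⟩
  · norm_num
  · have h2 : ((2*N+2+1)/2 : ℕ) = N + 1 := by omega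
    have hno : ¬ Odd (2*N+2) := by rw [Nat.odd_iff]; omega
    simp only [h2, if_neg hno]
    push_cast
    rw [mul_inv_cancel₀ (ne_of_gt hN1), one_smul]
    abel
  · intro i hi
    have hle : ((i+1)/2 : ℕ) ≤ N + 1 := by omega
    have ht1 : ((((i+1)/2 : ℕ)) : ℝ) * (((N:ℝ)+1))⁻¹ ≤ 1 := by
      rw [← div_eq_mul_inv, div_le_one hN1]
      exact_mod_cast hle
    have ht0 : (0:ℝ) ≤ ((((i+1)/2 : ℕ)) : ℝ) * (((N:ℝ)+1))⁻¹ := by positivity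
    by_cases ho : Odd i
    · simpa only [if_pos ho] using hmem _ a ht0 ht1 ha.le le_rfl
    · have := hmem _ 0 ht0 ht1 le_rfl ha.le
      simpa only [if_neg ho, zero_smul] using this
  · intro i hi1 hi2
    rcases Nat.even_or_odd i with he' | ho
    · -- i even, so i ≥ 2, i-1 odd
      have hk1 : ((i+1)/2 : ℕ) = ((i-1+1)/2 : ℕ) := by
        rcases he' with ⟨j, hj⟩; omega
      have hoi : ¬ Odd i := by rw [Nat.odd_iff]; rcases he' with ⟨j, hj⟩; omega
      have hoi1 : Odd (i-1) := by rw [Nat.odd_iff]; rcases he' with ⟨j, hj⟩; omega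
      simp only [hk1, if_neg hoi, if_pos hoi1]
      have hdiff : ∀ (w u : EucSp d), (z + w + 0) - (z + w + u) = -u := by
        intro w u; abel
      rw [hdiff, norm_neg, norm_smul, Real.norm_eq_abs, hne, mul_one, abs_of_pos ha]
      exact ⟨le_rfl, hab.le⟩
    · have hk : ((i+1)/2 : ℕ) = ((i-1+1)/2 : ℕ) + 1 := by
        rcases ho with ⟨j, hj⟩; omega
      have hoi1 : ¬ Odd (i-1) := by rw [Nat.odd_iff]; rcases ho with ⟨j, hj⟩; omega
      simp only [hk, if_pos ho, if_neg hoi1]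
      push_cast
      have key2 : ∀ (m : ℝ),
          (z + ((m+1) * (((N:ℝ)+1))⁻¹) • (y-z) + a • e)
            - (z + (m * (((N:ℝ)+1))⁻¹) • (y-z) + 0) = (δ + a) • e := by
        intro m
        have h1 : (m+1) * (((N:ℝ)+1))⁻¹ = m * (((N:ℝ)+1))⁻¹ + (((N:ℝ)+1))⁻¹ := by ring
        rw [h1, add_smul, hkey]
        module
      rw [key2]
      rw [norm_smul, Real.norm_eq_abs, hne, mul_one, abs_of_pos (by linarith : 0 < δ + a)]
      constructor <;> linarith
end
end

section
/- Reflection extension of an elliptic Lipschitz coefficient matrix preserves ellipticity and the Lipschitz constant. Let d ∈ ℕ, θ_E ≥ 1, θ_L ≥ 0. Let Ω₋ := (−1,0) × (0,1)^{d−1}, Ω₊ := (0,1) × (0,1)^{d−1}, Ω̃₋ := (−1,0] × (0,1)^{d−1}, and Ω := interior(closure(Ω₋) ∪ closure(Ω₊)). Let A₋ = (a₋^{ij})_{i,j=1}^d : Ω̃₋ → ℝ^{d×d} be symmetric and satisfy, for all x, y ∈ Ω̃₋ and all ξ ∈ ℝ^d, θ_E^{-1}|ξ|² ≤ ξᵀA₋(x)ξ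 ≤ θ_E|ξ|² and ‖A₋(x) − A₋(y)‖_∞ ≤ θ_L|x − y| (row-sum norm), and assume (Dir''): a₋^{1k}(x) = a₋^{k1}(x) = 0 for all k ∈ {2,…,d} and all x ∈ {0} × (0,1)^{d−1}. Define A_Ω = (a_Ω^{ij}) on Ω by A_Ω := A₋ on Ω̃₋ ∩ Ω, and for x ∈ Ω₊, writing x' := x − 2x₁e₁: a_Ω^{kk}(x) := a₋^{kk}(x') for k ∈ {1,…,d}, a_Ω^{kj}(x) = a_Ω^{jk}(x) := a₋^{kj}(x') for k, j ∈ {2,…,d} with k ≠ j, and a_Ω^{1k}(x) = a_Ω^{k1}(x) := −a₋^{1k}(x') for k ∈ {2,…,d}. Then for all x, y ∈ Ω and all ξ ∈ ℝ^d one has θ_E^{-1}|ξ|² ≤ ξᵀA_Ω(x)ξ ≤ θ_E|ξ|² and ‖A_Ω(x) − A_Ω(y)‖_∞ ≤ θ_L|x − y|. -/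
open MeasureTheory Real Set
open scoped ENNReal

noncomputable section

/-- Reflection `x ↦ x − 2x₁e₁` in the hyperplane `{x₁ = 0}`. -/
def reflPt {d : ℕ} [NeZero d] (x : EucSp d) : EucSp d :=
  x - (2 * x 0) • EuclideanSpace.single 0 1

/-- `Ω₋ = (−1,0) × (0,1)^{d−1}`. -/
def omegaMinus (d : ℕ) [NeZero d] : Set (EucSp d) :=
  {x | x 0 ∈ Ioo (-1 : ℝ) 0 ∧ ∀ i, i ≠ 0 → x i ∈ Ioo (0 : ℝ) 1}

/-- `Ω₊ = (0,1) × (0,1)^{d−1}`. -/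
def omegaPlus (d : ℕ) [NeZero d] : Set (EucSp d) :=
  {x | x 0 ∈ Ioo (0 : ℝ) 1 ∧ ∀ i, i ≠ 0 → x i ∈ Ioo (0 : ℝ) 1}

/-- `Ω̃₋ = (−1,0] × (0,1)^{d−1}`. -/
def omegaTildeMinus (d : ℕ) [NeZero d] : Set (EucSp d) :=
  {x | x 0 ∈ Ioc (-1 : ℝ) 0 ∧ ∀ i, i ≠ 0 → x i ∈ Ioo (0 : ℝ) 1}

/-- `Ω = interior(closure Ω₋ ∪ closure Ω₊)`. -/
def omegaFull (d : ℕ) [NeZero d] : Set (EucSp d) :=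
  interior (closure (omegaMinus d) ∪ closure (omegaPlus d))

/-- The reflection extension `A_Ω` of the coefficient matrix `A₋`: equal to `A₋`
where `x₁ ≤ 0`, and for `x₁ > 0` given (with `x' = x − 2x₁e₁`) by
`a_Ω^{kk}(x) = a₋^{kk}(x')`, `a_Ω^{kj}(x) = a₋^{kj}(x')` for `k,j ≠ 1`, and
`a_Ω^{1k}(x) = a_Ω^{k1}(x) = −a₋^{1k}(x')` for `k ≠ 1`. -/
def AOmega {d : ℕ} [NeZero d] (A : EucSp d → Matrix (Fin d) (Fin d) ℝ)
    (x : EucSp d) : Matrix (Fin d) (Fin d) ℝ :=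
  if x 0 ≤ 0 then A x
  else Matrix.of fun i j =>
    (if i = 0 then (-1 : ℝ) else 1) * (if j = 0 then (-1 : ℝ) else 1) * A (reflPt x) i j

section AuxReflection
-- AUX

variable {d : ℕ} [NeZero d]

lemma reflPt_zero (x : EucSp d) : reflPt x 0 = -x 0 := by
  show x 0 - (2 * x 0) * (EuclideanSpace.single (0 : Fin d) (1:ℝ)) 0 = -x 0
  simp [EuclideanSpace.single_apply]
  ring

lemma reflPt_ne (x : EucSp d) {i : Fin d} (h : i ≠ 0) : reflPt x i = x i := by
  show x i - (2 * x 0) * (EuclideanSpace.single (0 : Fin d) (1:ℝ)) i = x i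
  simp [EuclideanSpace.single_apply, h]

lemma norm_eq_of_sq {u v : EucSp d} (h : ∀ i, (u i)^2 = (v i)^2) : ‖u‖ = ‖v‖ := by
  rw [EuclideanSpace.norm_eq, EuclideanSpace.norm_eq]
  congr 1
  refine Finset.sum_congr rfl fun i _ => ?_
  rw [Real.norm_eq_abs, Real.norm_eq_abs, sq_abs, sq_abs, h i]

lemma norm_refl_sub (x y : EucSp d) : ‖reflPt x - reflPt y‖ = ‖x - y‖ := by
  refine norm_eq_of_sq fun i => ?_
  show (reflPt x i - reflPt y i)^2 = (x i - y i)^2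
  rcases eq_or_ne i 0 with rfl | h
  · rw [reflPt_zero, reflPt_zero]; ring
  · rw [reflPt_ne x h, reflPt_ne y h]

lemma norm_sub_refl {z : EucSp d} (hz : z 0 = 0) (y : EucSp d) :
    ‖z - reflPt y‖ = ‖z - y‖ := by
  refine norm_eq_of_sq fun i => ?_
  show (z i - reflPt y i)^2 = (z i - y i)^2
  rcases eq_or_ne i 0 with rfl | h
  · rw [reflPt_zero, hz]; ring
  · rw [reflPt_ne y h]

lemma omegaFull_coords {x : EucSp d} (hx : x ∈ omegaFull d) :
    (-1 < x 0 ∧ x 0 < 1) ∧ ∀ i, i ≠ 0 → x i ∈ Ioo (0:ℝ) 1 := by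
  set S : Set (EucSp d) :=
    {y | ∀ i, y i ∈ Icc (if i = (0 : Fin d) then (-1:ℝ) else 0) 1} with hSdef
  have hS : IsClosed S := by
    have : S = ⋂ i, (fun y : EucSp d => y i) ⁻¹' Icc (if i = (0 : Fin d) then (-1:ℝ) else 0) 1 := by
      ext y; simp [hSdef, Set.mem_iInter]
    rw [this]
    exact isClosed_iInter fun i => isClosed_Icc.preimage (EuclideanSpace.proj i).continuous
  have hsub : closure (omegaMinus d) ∪ closure (omegaPlus d) ⊆ S := by
    refine Set.union_subset (closure_minimal ?_ hS) (closure_minimal ?_ hS) <;>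
    · rintro y ⟨h0, hi⟩ i
      rcases eq_or_ne i 0 with rfl | h
      · simp only [Set.mem_Icc, if_pos]
        norm_num
        constructor <;> linarith [h0.1, h0.2]
      · have := hi i h
        simp only [if_neg h, Set.mem_Icc]
        exact ⟨le_of_lt this.1, le_of_lt this.2⟩
  have hmem : omegaFull d ∈ nhds x := (isOpen_interior.mem_nhds hx)
  obtain ⟨ε, hε, hball⟩ := Metric.mem_nhds_iff.mp hmem
  have hballS : Metric.ball x ε ⊆ S := fun y hy => hsub (interior_subset (hball hy))
  have key : ∀ i : Fin d, (if i = (0 : Fin d) then (-1:ℝ) else 0) < x i ∧ x i < 1 := by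
    intro i
    have hp : x + (ε/2) • EuclideanSpace.single i (1:ℝ) ∈ S := by
      apply hballS
      rw [Metric.mem_ball, dist_eq_norm, add_sub_cancel_left, norm_smul,
        EuclideanSpace.norm_single, norm_one, mul_one, Real.norm_eq_abs,
        abs_of_pos (by linarith : (0:ℝ) < ε/2)]
      linarith
    have hq : x - (ε/2) • EuclideanSpace.single i (1:ℝ) ∈ S := by
      apply hballS
      rw [Metric.mem_ball, dist_eq_norm, sub_sub_cancel_left, norm_neg, norm_smul,
        EuclideanSpace.norm_single, norm_one, mul_one, Real.norm_eq_abs,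
        abs_of_pos (by linarith : (0:ℝ) < ε/2)]
      linarith
    have hp' := hp i
    have hq' := hq i
    have ep : (x + (ε/2) • EuclideanSpace.single i (1:ℝ)) i = x i + ε/2 := by
      show x i + (ε/2) * (EuclideanSpace.single i (1:ℝ)) i = _
      simp [EuclideanSpace.single_apply]
    have eq' : (x - (ε/2) • EuclideanSpace.single i (1:ℝ)) i = x i - ε/2 := by
      show x i - (ε/2) * (EuclideanSpace.single i (1:ℝ)) i = _
      simp [EuclideanSpace.single_apply]
    rw [ep] at hp'
    rw [eq'] at hq'
    exact ⟨by linarith [hq'.1], by linarith [hp'.2]⟩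
  constructor
  · have := key 0; simpa using this
  · intro i h
    have := key i
    rw [if_neg h] at this
    exact ⟨this.1, this.2⟩

lemma rowSumNorm_le {M : Matrix (Fin d) (Fin d) ℝ} {c : ℝ}
    (h : ∀ i, ∑ j, |M i j| ≤ c) : rowSumNorm M ≤ c := by
  haveI : Nonempty (Fin d) := ⟨0⟩
  exact ciSup_le h

lemma row_le_rowSumNorm (M : Matrix (Fin d) (Fin d) ℝ) (i : Fin d) :
    ∑ j, |M i j| ≤ rowSumNorm M := by
  unfold rowSumNorm
  exact le_ciSup (f := fun i => ∑ j, |M i j|) (Set.Finite.bddAbove (Set.finite_range _)) i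

lemma rowSumNorm_sub_comm (M N : Matrix (Fin d) (Fin d) ℝ) :
    rowSumNorm (M - N) = rowSumNorm (N - M) := by
  unfold rowSumNorm
  exact congrArg _ (funext fun i => Finset.sum_congr rfl fun j _ => by
    rw [Matrix.sub_apply, Matrix.sub_apply, abs_sub_comm])

example : True := trivial

lemma mixed_case {θL : ℝ} (hθL : 0 ≤ θL)
    (A : EucSp d → Matrix (Fin d) (Fin d) ℝ)
    (hAl : IsLipA θL A (omegaTildeMinus d))
    (hDir : ∀ k : Fin d, k ≠ 0 → ∀ x : EucSp d,
      x 0 = 0 → (∀ i, i ≠ 0 → x i ∈ Ioo (0 : ℝ) 1) → A x 0 k = 0 ∧ A x k 0 = 0)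
    {x y : EucSp d} (hx0 : -1 < x 0) (hx1 : x 0 ≤ 0)
    (hxi : ∀ i, i ≠ 0 → x i ∈ Ioo (0:ℝ) 1)
    (hy0 : 0 < y 0) (hy1 : y 0 < 1) (hyi : ∀ i, i ≠ 0 → y i ∈ Ioo (0:ℝ) 1) :
    rowSumNorm (AOmega A x - AOmega A y) ≤ θL * ‖x - y‖ := by
  have hden : 0 < y 0 - x 0 := by linarith
  set t : ℝ := (-(x 0)) / (y 0 - x 0) with ht
  have ht0 : 0 ≤ t := div_nonneg (by linarith) (le_of_lt hden)
  have ht1 : t ≤ 1 := by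
    rw [ht, div_le_one hden]; linarith
  set z : EucSp d := x + t • (y - x) with hzdef
  have hzi : ∀ i : Fin d, z i = x i + t * (y i - x i) := fun i => rfl
  have hz0 : z 0 = 0 := by
    rw [hzi, ht, div_mul_cancel₀ _ (ne_of_gt hden)]; ring
  have hzbox : ∀ i, i ≠ 0 → z i ∈ Ioo (0:ℝ) 1 := by
    intro i hi
    have h1 := hxi i hi
    have h2 := hyi i hi
    rw [hzi]
    rcases le_total (x i) (y i) with hle | hle
    · have h3 : 0 ≤ t * (y i - x i) := mul_nonneg ht0 (by linarith)
      have h4 : t * (y i - x i) ≤ y i - x i := by nlinarith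
      exact ⟨by linarith [h1.1], by linarith [h2.2]⟩
    · have h3 : t * (y i - x i) ≤ 0 := mul_nonpos_of_nonneg_of_nonpos ht0 (by linarith)
      have h4 : y i - x i ≤ t * (y i - x i) := by nlinarith
      exact ⟨by linarith [h2.1], by linarith [h1.2]⟩
  have hxm : x ∈ omegaTildeMinus d := ⟨⟨hx0, hx1⟩, hxi⟩
  have hzm : z ∈ omegaTildeMinus d := ⟨⟨by rw [hz0]; linarith, le_of_eq hz0⟩, hzbox⟩
  have hy'm : reflPt y ∈ omegaTildeMinus d := by
    refine ⟨⟨?_, ?_⟩, ?_⟩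
    · rw [reflPt_zero]; linarith
    · rw [reflPt_zero]; linarith
    · intro i hi; rw [reflPt_ne y hi]; exact hyi i hi
  have hxz : ‖x - z‖ = t * ‖x - y‖ := by
    have : x - z = t • (x - y) := by
      rw [hzdef]; module
    rw [this, norm_smul, Real.norm_eq_abs, abs_of_nonneg ht0]
  have hzy : ‖z - y‖ = (1 - t) * ‖x - y‖ := by
    have : z - y = (1 - t) • (x - y) := by
      rw [hzdef]; module
    rw [this, norm_smul, Real.norm_eq_abs, abs_of_nonneg (by linarith)]
  have hzy' : ‖reflPt y - z‖ = (1 - t) * ‖x - y‖ := by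
    rw [norm_sub_rev, norm_sub_refl hz0, hzy]
  have hAx : AOmega A x = A x := if_pos hx1
  have hAy : AOmega A y = Matrix.of fun i j =>
      (if i = 0 then (-1 : ℝ) else 1) * (if j = 0 then (-1 : ℝ) else 1)
        * A (reflPt y) i j := if_neg (not_le.mpr hy0)
  apply rowSumNorm_le
  intro i
  have step1 : ∑ j, |(AOmega A x - AOmega A y) i j| ≤
      ∑ j, (|(A x - A z) i j| + |(A (reflPt y) - A z) i j|) := by
    refine Finset.sum_le_sum fun j _ => ?_
    rw [Matrix.sub_apply, Matrix.sub_apply, Matrix.sub_apply, hAx, hAy, Matrix.of_apply]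
    rcases eq_or_ne i 0 with rfl | hi <;> rcases eq_or_ne j 0 with rfl | hj
    · rw [if_pos (rfl : (0:Fin d) = 0)]
      have e : (-1:ℝ) * -1 * A (reflPt y) 0 0 = A (reflPt y) 0 0 := by ring
      rw [e]
      calc |A x 0 0 - A (reflPt y) 0 0|
          ≤ |A x 0 0 - A z 0 0| + |A z 0 0 - A (reflPt y) 0 0| := abs_sub_le _ _ _
        _ = _ := by rw [abs_sub_comm (A z 0 0)]
    · rw [if_pos (rfl : (0:Fin d) = 0), if_neg hj, (hDir j hj z hz0 hzbox).1, sub_zero, sub_zero]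
      have e : A x 0 j - (-1:ℝ) * 1 * A (reflPt y) 0 j = A x 0 j + A (reflPt y) 0 j := by ring
      rw [e]; exact abs_add_le _ _
    · rw [if_neg hi, if_pos (rfl : (0:Fin d) = 0), (hDir i hi z hz0 hzbox).2, sub_zero, sub_zero]
      have e : A x i 0 - (1:ℝ) * -1 * A (reflPt y) i 0 = A x i 0 + A (reflPt y) i 0 := by ring
      rw [e]; exact abs_add_le _ _
    · rw [if_neg hi, if_neg hj]
      have e : (1:ℝ) * 1 * A (reflPt y) i j = A (reflPt y) i j := by ring
      rw [e]
      calc |A x i j - A (reflPt y) i j|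
          ≤ |A x i j - A z i j| + |A z i j - A (reflPt y) i j| := abs_sub_le _ _ _
        _ = _ := by rw [abs_sub_comm (A z i j)]
  calc ∑ j, |(AOmega A x - AOmega A y) i j|
      ≤ ∑ j, (|(A x - A z) i j| + |(A (reflPt y) - A z) i j|) := step1
    _ = (∑ j, |(A x - A z) i j|) + ∑ j, |(A (reflPt y) - A z) i j| := Finset.sum_add_distrib
    _ ≤ rowSumNorm (A x - A z) + rowSumNorm (A (reflPt y) - A z) := by
        gcongr <;> [exact row_le_rowSumNorm _ i; exact row_le_rowSumNorm _ i]
    _ ≤ θL * ‖x - z‖ + θL * ‖reflPt y - z‖ := by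
        gcongr <;> [exact hAl x hxm z hzm; exact hAl (reflPt y) hy'm z hzm]
    _ = θL * (t * ‖x - y‖) + θL * ((1 - t) * ‖x - y‖) := by rw [hxz, hzy']
    _ = θL * ‖x - y‖ := by ring

end AuxReflection

/-- **Reflection extension preserves ellipticity and the Lipschitz constant**
(Lemma A.1(i)), under Assumption (Dir''). -/

theorem reflection_extension (d : ℕ) [NeZero d] (θE θL : ℝ) (hθE : 1 ≤ θE) (hθL : 0 ≤ θL)
    (A : EucSp d → Matrix (Fin d) (Fin d) ℝ)
    (hAs : IsSymmA A (omegaTildeMinus d))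
    (hAe : IsElliptic θE A (omegaTildeMinus d))
    (hAl : IsLipA θL A (omegaTildeMinus d))
    (hDir : ∀ k : Fin d, k ≠ 0 → ∀ x : EucSp d,
      x 0 = 0 → (∀ i, i ≠ 0 → x i ∈ Ioo (0 : ℝ) 1) → A x 0 k = 0 ∧ A x k 0 = 0) :
    IsElliptic θE (AOmega A) (omegaFull d) ∧ IsLipA θL (AOmega A) (omegaFull d) := by
  constructor
  · intro x hx ξ
    obtain ⟨⟨hxl, hxr⟩, hxi⟩ := omegaFull_coords hx
    by_cases hx1 : x 0 ≤ 0
    · simp only [AOmega, if_pos hx1]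
      exact hAe x ⟨⟨hxl, hx1⟩, hxi⟩ ξ
    · push_neg at hx1
      have hx'm : reflPt x ∈ omegaTildeMinus d :=
        ⟨⟨by rw [reflPt_zero]; linarith, by rw [reflPt_zero]; linarith⟩,
          fun i hi => by rw [reflPt_ne x hi]; exact hxi i hi⟩
      have hsq : ∑ i, ((if i = (0:Fin d) then (-1:ℝ) else 1) * ξ i) ^ 2 = ∑ i, ξ i ^ 2 := by
        refine Finset.sum_congr rfl fun i _ => ?_
        rcases eq_or_ne i 0 with rfl | h
        · rw [if_pos (rfl : (0:Fin d) = 0)]; ring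
        · rw [if_neg h]; ring
      have hform : ∑ i, ∑ j, ξ i * AOmega A x i j * ξ j
          = ∑ i, ∑ j, ((if i = (0:Fin d) then (-1:ℝ) else 1) * ξ i) * A (reflPt x) i j
              * ((if j = (0:Fin d) then (-1:ℝ) else 1) * ξ j) := by
        refine Finset.sum_congr rfl fun i _ => Finset.sum_congr rfl fun j _ => ?_
        simp only [AOmega, if_neg (not_le.mpr hx1), Matrix.of_apply]
        ring
      rw [hform, ← hsq]
      exact hAe (reflPt x) hx'm _
  · intro x hx y hy
    obtain ⟨⟨hxl, hxr⟩, hxi⟩ := omegaFull_coords hx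
    obtain ⟨⟨hyl, hyr⟩, hyi⟩ := omegaFull_coords hy
    by_cases hx1 : x 0 ≤ 0 <;> by_cases hy1 : y 0 ≤ 0
    · have e : AOmega A x - AOmega A y = A x - A y := by
        simp only [AOmega, if_pos hx1, if_pos hy1]
      rw [e]
      exact hAl x ⟨⟨hxl, hx1⟩, hxi⟩ y ⟨⟨hyl, hy1⟩, hyi⟩
    · push_neg at hy1
      exact mixed_case hθL A hAl hDir hxl hx1 hxi hy1 hyr hyi
    · push_neg at hx1
      rw [rowSumNorm_sub_comm, norm_sub_rev]
      exact mixed_case hθL A hAl hDir hyl hy1 hyi hx1 hxr hxi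
    · push_neg at hx1 hy1
      have hx'm : reflPt x ∈ omegaTildeMinus d :=
        ⟨⟨by rw [reflPt_zero]; linarith, by rw [reflPt_zero]; linarith⟩,
          fun i hi => by rw [reflPt_ne x hi]; exact hxi i hi⟩
      have hy'm : reflPt y ∈ omegaTildeMinus d :=
        ⟨⟨by rw [reflPt_zero]; linarith, by rw [reflPt_zero]; linarith⟩,
          fun i hi => by rw [reflPt_ne y hi]; exact hyi i hi⟩
      have e : rowSumNorm (AOmega A x - AOmega A y)
          = rowSumNorm (A (reflPt x) - A (reflPt y)) := by
        unfold rowSumNorm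
        refine congrArg _ (funext fun i => Finset.sum_congr rfl fun j _ => ?_)
        simp only [AOmega, if_neg (not_le.mpr hx1), if_neg (not_le.mpr hy1),
          Matrix.sub_apply, Matrix.of_apply]
        rcases eq_or_ne i 0 with rfl | hi <;> rcases eq_or_ne j 0 with rfl | hj
        · rw [if_pos (rfl : (0:Fin d) = 0)]
          congr 1
          ring
        · rw [if_pos (rfl : (0:Fin d) = 0), if_neg hj,
            show (-1:ℝ) * 1 * A (reflPt x) 0 j - (-1) * 1 * A (reflPt y) 0 j
              = -(A (reflPt x) 0 j - A (reflPt y) 0 j) from by ring, abs_neg]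
        · rw [if_neg hi, if_pos (rfl : (0:Fin d) = 0),
            show (1:ℝ) * -1 * A (reflPt x) i 0 - 1 * -1 * A (reflPt y) i 0
              = -(A (reflPt x) i 0 - A (reflPt y) i 0) from by ring, abs_neg]
        · rw [if_neg hi, if_neg hj]
          congr 1
          ring
      rw [e, ← norm_refl_sub x y]
      exact hAl (reflPt x) hx'm (reflPt y) hy'm
end
end
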